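/- Let r = 0, x > 0, k = 2, and define on 𝒲 = {(λ₁,λ₂) : λ₁ > λ₂ > 0} the function φ(λ₁,λ₂) = |λ₁J₁(xλ₁)J₀(xλ₂) − λ₂J₁(xλ₂)J₀(xλ₁)|⁴/(λ₁²−λ₂²)² · λ₁λ₂. Then ∫_𝒲 φ dλ = ∞. -/

import Mathlib

/-!
For `λ₂ ∈ [1/(2x), 1/x]` the power series give `J₀(xλ₂) ≥ 2/3` and `|J₁(xλ₂)| ≤ 2/3`.
For `s ≥ 1` the envelope `P = s (J₀² + J₁²) - J₀ J₁` has derivative `J₀ J₁ / s`, of size at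
most `P / s²`, so `P` stays between `1/40` and `10`. Hence, wherever `xλ₁ ≥ 200` and
`J₁(xλ₁)² ≥ 1/(100 xλ₁)`, the term `λ₁ J₁(xλ₁) J₀(xλ₂)` dominates the numerator and the
integrand is at least of order `1/(x³λ₁)`. The function `v(s) = √s J₁(s)` satisfies
`v² + v'² ≥ 1/40`, so by the mean value theorem it cannot stay small on a window of length 5,
and since `|v'| ≤ 7` it is large on a subinterval of fixed length. The boxes over these
subintervals, one per window, contribute a divergent harmonic series.
-/

open MeasureTheory

/-- Bessel function of the first kind of natural order `r`, via its power series. -/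
noncomputable def besselJ (r : ℕ) (s : ℝ) : ℝ :=
  ∑' l : ℕ, ((-1 : ℝ)) ^ l * (s / 2) ^ (2 * l + r) / ((l.factorial : ℝ) * ((r + l).factorial : ℝ))

open Set Real Nat Function

noncomputable def besselTerm (r l : ℕ) (s : ℝ) : ℝ :=
  (-1) ^ l * (s / 2) ^ (2 * l + r) / ((l ! : ℝ) * ((r + l)! : ℝ))

theorem besselJ_eq_tsum (r : ℕ) (s : ℝ) : besselJ r s = ∑' l, besselTerm r l s := rfl

theorem abs_besselTerm (r l : ℕ) (s : ℝ) :
    |besselTerm r l s| = (|s| / 2) ^ (2 * l + r) / ((l ! : ℝ) * ((r + l)! : ℝ)) := by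
  simp [besselTerm, abs_div, abs_mul, abs_pow]

theorem abs_besselTerm_le {R s : ℝ} (r l : ℕ) (hs : |s| ≤ R) :
    |besselTerm r l s| ≤ (R / 2) ^ r * ((R / 2) ^ 2) ^ l / l ! := by
  have hR : 0 ≤ R := (abs_nonneg s).trans hs
  calc |besselTerm r l s| ≤ (R / 2) ^ (2 * l + r) / l ! := by
        rw [abs_besselTerm]
        gcongr
        exact le_mul_of_one_le_right (by positivity) (by norm_cast; exact (r + l).factorial_pos)
    _ = (R / 2) ^ r * ((R / 2) ^ 2) ^ l / l ! := by rw [pow_add, pow_mul]; ring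

theorem summable_besselTerm_bound (R : ℝ) (r : ℕ) :
    Summable fun l : ℕ => (R / 2) ^ r * ((R / 2) ^ 2) ^ l / l ! := by
  simpa only [mul_div_assoc] using (Real.summable_pow_div_factorial _).mul_left ((R / 2) ^ r)

theorem summable_besselTerm (r : ℕ) (s : ℝ) : Summable fun l => besselTerm r l s :=
  .of_norm_bounded (summable_besselTerm_bound |s| r) fun l => abs_besselTerm_le r l le_rfl

theorem besselTerm_succ_order (r l : ℕ) (s : ℝ) :
    besselTerm (r + 1) l s = s / (2 * (r + l + 1)) * besselTerm r l s := by
  rw [besselTerm, besselTerm, show r + 1 + l = (r + l) + 1 by ring, factorial_succ]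
  push_cast
  field_simp
  ring

theorem hasDerivAt_const_mul_half_pow (c : ℝ) (n : ℕ) (s : ℝ) :
    HasDerivAt (fun y => c * (y / 2) ^ (n + 1)) (c * ((n + 1) / 2 * (s / 2) ^ n)) s := by
  refine ((((hasDerivAt_id' s).div_const 2).fun_pow (n + 1)).const_mul c).congr_deriv ?_
  simp only [add_tsub_cancel_right]
  push_cast
  ring

theorem hasDerivAt_besselTerm_succ_order (r l : ℕ) (s : ℝ) :
    HasDerivAt (besselTerm (r + 1) l)
      ((2 * l + r + 1) / (2 * (r + l + 1)) * besselTerm r l s) s := by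
  have h := hasDerivAt_const_mul_half_pow ((-1) ^ l / ((l ! : ℝ) * ((r + 1 + l)! : ℝ)))
    (2 * l + r) s
  convert h using 1
  · ext y; rw [besselTerm]; ring
  · rw [besselTerm, show r + 1 + l = (r + l) + 1 by ring, factorial_succ]
    push_cast
    field_simp

theorem hasDerivAt_besselTerm_zero_succ (l : ℕ) (s : ℝ) :
    HasDerivAt (besselTerm 0 (l + 1)) (-besselTerm 1 l s) s := by
  have h := hasDerivAt_const_mul_half_pow ((-1) ^ (l + 1) / (((l + 1)! : ℝ) * ((l + 1)! : ℝ)))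
    (2 * l + 1) s
  convert h using 1
  · ext y; rw [besselTerm, zero_add]; ring
  · rw [besselTerm, show 1 + l = l + 1 by ring, factorial_succ]
    push_cast
    field_simp
    ring

theorem hasDerivAt_tsum_of_abs_le_besselTerm {f f' : ℕ → ℝ → ℝ} (r : ℕ)
    (hf : ∀ l y, HasDerivAt (f l) (f' l y) y) (hf' : ∀ l y, |f' l y| ≤ |besselTerm r l y|)
    (h0 : Summable fun l => f l 0) (s : ℝ) :
    HasDerivAt (fun y => ∑' l, f l y) (∑' l, f' l s) s := by
  have hR : 0 < |s| + 1 := by positivity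
  refine hasDerivAt_tsum_of_isPreconnected (summable_besselTerm_bound (|s| + 1) r)
    Metric.isOpen_ball (convex_ball 0 (|s| + 1)).isPreconnected (fun l y _ => hf l y)
    (fun l y hy => (hf' l y).trans (abs_besselTerm_le r l ?_)) (Metric.mem_ball_self hR) h0 ?_
  · simpa using (mem_ball_zero_iff.mp hy).le
  · simp

theorem hasDerivAt_besselJ_zero (s : ℝ) : HasDerivAt (besselJ 0) (-besselJ 1 s) s := by
  have hJ : besselJ 0 = fun y => 1 + ∑' l, besselTerm 0 (l + 1) y := by
    ext y
    rw [besselJ_eq_tsum, (summable_besselTerm 0 y).tsum_eq_zero_add]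
    simp [besselTerm]
  rw [hJ, besselJ_eq_tsum, ← tsum_neg]
  refine (hasDerivAt_tsum_of_abs_le_besselTerm 1 hasDerivAt_besselTerm_zero_succ
    (fun l y => (abs_neg _).le) ?_ s).const_add 1
  exact (summable_nat_add_iff 1).mpr (summable_besselTerm 0 0)

theorem hasDerivAt_besselJ_succ (r : ℕ) {s : ℝ} (hs : s ≠ 0) :
    HasDerivAt (besselJ (r + 1)) (besselJ r s - (r + 1) / s * besselJ (r + 1) s) s := by
  have hcoef : ∀ l : ℕ, |(2 * l + r + 1 : ℝ) / (2 * (r + l + 1))| ≤ 1 := fun l => by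
    rw [abs_of_nonneg (by positivity), div_le_one (by positivity)]
    linarith
  have h := hasDerivAt_tsum_of_abs_le_besselTerm r (hasDerivAt_besselTerm_succ_order r)
    (fun l y => by rw [abs_mul]; exact mul_le_of_le_one_left (abs_nonneg _) (hcoef l))
    (summable_besselTerm _ 0) s
  refine h.congr_deriv ?_
  rw [besselJ_eq_tsum, besselJ_eq_tsum, ← tsum_mul_left,
    ← ((summable_besselTerm r s).tsum_sub ((summable_besselTerm (r + 1) s).mul_left _))]
  congr 1
  ext l
  rw [besselTerm_succ_order]
  field_simp
  ring

theorem abs_tsum_besselTerm_add_le (r k : ℕ) {t : ℝ} (ht : |t| ≤ 1) :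
    |∑' l, besselTerm r (l + k) t| ≤ 4 / 3 * ((1 / 2) ^ r * (1 / 4) ^ k / (r + k)!) := by
  set c : ℝ := (1 / 2) ^ r * (1 / 4) ^ k / (r + k)!
  have hgeo : HasSum (fun l : ℕ => c * (1 / 4) ^ l) (4 / 3 * c) := by
    rw [show 4 / 3 * c = c * (1 - 1 / 4)⁻¹ by norm_num [mul_comm]]
    exact (hasSum_geometric_of_lt_one (by norm_num) (by norm_num)).mul_left c
  rw [← Real.norm_eq_abs]
  refine tsum_of_norm_bounded hgeo fun l => ?_
  have hfac : ((r + k)! : ℝ) ≤ (l + k)! * (r + (l + k))! := by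
    norm_cast
    exact (factorial_le (by omega)).trans (le_mul_of_one_le_left' (factorial_pos _))
  calc ‖besselTerm r (l + k) t‖
      = (|t| / 2) ^ (2 * (l + k) + r) / ((l + k)! * (r + (l + k))!) := abs_besselTerm ..
    _ ≤ (1 / 2) ^ (2 * (l + k) + r) / (r + k)! := by gcongr
    _ = c * (1 / 4) ^ l := by
        rw [pow_add, pow_mul, pow_add]
        simp only [c]
        ring

theorem abs_besselJ_le (r : ℕ) {t : ℝ} (ht : |t| ≤ 1) :
    |besselJ r t| ≤ 4 / 3 * ((1 / 2) ^ r / r !) := by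
  simpa [besselJ_eq_tsum] using abs_tsum_besselTerm_add_le r 0 ht

theorem two_thirds_le_besselJ_zero {t : ℝ} (ht : |t| ≤ 1) : 2 / 3 ≤ besselJ 0 t := by
  have hhead : besselTerm 0 0 t = 1 := by simp [besselTerm]
  have htail : |∑' l, besselTerm 0 (l + 1) t| ≤ 1 / 3 :=
    (abs_tsum_besselTerm_add_le 0 1 ht).trans_eq (by norm_num)
  rw [besselJ_eq_tsum, (summable_besselTerm 0 t).tsum_eq_zero_add, hhead]
  linarith [neg_abs_le (∑' l, besselTerm 0 (l + 1) t)]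

theorem five_twelfths_le_besselJ_one_one : 5 / 12 ≤ besselJ 1 1 := by
  have hhead : besselTerm 1 0 1 = 1 / 2 := by norm_num [besselTerm]
  have htail : |∑' l, besselTerm 1 (l + 1) 1| ≤ 1 / 12 :=
    (abs_tsum_besselTerm_add_le 1 1 (by norm_num)).trans_eq (by norm_num)
  rw [besselJ_eq_tsum, (summable_besselTerm 1 1).tsum_eq_zero_add, hhead]
  linarith [neg_abs_le (∑' l, besselTerm 1 (l + 1) 1)]

theorem monotoneOn_mul_exp_neg_div {f f' : ℝ → ℝ} (c : ℝ)
    (hf : ∀ s, 1 ≤ s → HasDerivAt f (f' s) s)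
    (hf' : ∀ s, 1 ≤ s → 0 ≤ f' s + c * f s / s ^ 2) :
    MonotoneOn (fun s => f s * exp (-c / s)) (Ici 1) := by
  have hd : ∀ s, 1 ≤ s → HasDerivAt (fun s => f s * exp (-c / s))
      (exp (-c / s) * (f' s + c * f s / s ^ 2)) s := fun s hs => by
    have hs0 : s ≠ 0 := by positivity
    refine ((hf s hs).mul ((hasDerivAt_inv hs0).const_mul (-c)).exp).congr_deriv ?_
    field_simp
  refine monotoneOn_of_hasDerivWithinAt_nonneg (convex_Ici 1)
    (fun s hs => (hd s hs).continuousAt.continuousWithinAt)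
    (fun s hs => (hd s (interior_subset hs)).hasDerivWithinAt)
    (fun s hs => mul_nonneg (exp_pos _).le (hf' s (interior_subset hs)))

theorem mul_exp_neg_one_le_and_le_mul_exp_one {f f' : ℝ → ℝ}
    (hf : ∀ s, 1 ≤ s → HasDerivAt f (f' s) s)
    (hf' : ∀ s, 1 ≤ s → |f' s| ≤ f s / s ^ 2) {s : ℝ} (hs : 1 ≤ s) :
    f 1 * exp (-1) ≤ f s ∧ f s ≤ f 1 * exp 1 := by
  have hfs : 0 ≤ f s := by
    have h := mul_nonneg ((abs_nonneg _).trans (hf' s hs)) (sq_nonneg s)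
    rwa [div_mul_cancel₀ _ (by positivity)] at h
  have hlow := monotoneOn_mul_exp_neg_div 1 hf fun s hs => by
    rw [one_mul]
    linarith [neg_abs_le (f' s), hf' s hs]
  have hup := monotoneOn_mul_exp_neg_div (f := fun s => -f s) (-1) (fun s hs => (hf s hs).neg)
    fun s hs => by
      rw [neg_one_mul, neg_neg]
      linarith [le_abs_self (f' s), hf' s hs]
  have h1 : (1 : ℝ) ∈ Ici 1 := self_mem_Ici
  specialize hlow h1 hs hs
  specialize hup h1 hs hs
  simp only [neg_neg, div_one] at hlow hup
  constructor
  · have : -1 / s ≤ 0 := div_nonpos_of_nonpos_of_nonneg (by norm_num) (by positivity)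
    nlinarith [exp_le_one_iff.mpr this]
  · nlinarith [one_le_exp_iff.mpr (show 0 ≤ 1 / s by positivity)]

noncomputable def besselEnvelope (s : ℝ) : ℝ :=
  s * (besselJ 0 s ^ 2 + besselJ 1 s ^ 2) - besselJ 0 s * besselJ 1 s

theorem hasDerivAt_besselEnvelope {s : ℝ} (hs : s ≠ 0) :
    HasDerivAt besselEnvelope (besselJ 0 s * besselJ 1 s / s) s := by
  have h0 := hasDerivAt_besselJ_zero s
  have h1 := hasDerivAt_besselJ_succ 0 hs
  refine (((hasDerivAt_id' s).fun_mul ((h0.fun_pow 2).fun_add (h1.fun_pow 2))).fun_sub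
    (h0.fun_mul h1)).congr_deriv ?_
  push_cast
  field_simp
  ring

theorem sub_half_mul_le_besselEnvelope (s : ℝ) :
    (s - 1 / 2) * (besselJ 0 s ^ 2 + besselJ 1 s ^ 2) ≤ besselEnvelope s := by
  unfold besselEnvelope
  nlinarith [sq_nonneg (besselJ 0 s - besselJ 1 s)]

theorem besselEnvelope_le_add_half_mul (s : ℝ) :
    besselEnvelope s ≤ (s + 1 / 2) * (besselJ 0 s ^ 2 + besselJ 1 s ^ 2) := by
  unfold besselEnvelope
  nlinarith [sq_nonneg (besselJ 0 s + besselJ 1 s)]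

theorem mul_sq_add_sq_le_two_mul_besselEnvelope {s : ℝ} (hs : 1 ≤ s) :
    s * (besselJ 0 s ^ 2 + besselJ 1 s ^ 2) ≤ 2 * besselEnvelope s := by
  nlinarith [sub_half_mul_le_besselEnvelope s, sq_nonneg (besselJ 0 s), sq_nonneg (besselJ 1 s)]

theorem abs_besselJ_mul_besselJ_div_le {s : ℝ} (hs : 1 ≤ s) :
    |besselJ 0 s * besselJ 1 s / s| ≤ besselEnvelope s / s ^ 2 := by
  have hs0 : 0 < s := by positivity
  have hE := mul_sq_add_sq_le_two_mul_besselEnvelope hs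
  rw [abs_div, abs_of_pos hs0, div_le_div_iff₀ hs0 (by positivity), abs_mul]
  nlinarith [sq_nonneg (|besselJ 0 s| - |besselJ 1 s|), sq_abs (besselJ 0 s),
    sq_abs (besselJ 1 s)]

theorem besselEnvelope_one_bounds :
    25 / 288 ≤ besselEnvelope 1 ∧ besselEnvelope 1 ≤ 10 / 3 := by
  have hJ0 := abs_le.mp (abs_besselJ_le 0 (by norm_num : |(1 : ℝ)| ≤ 1))
  have hJ1 := abs_le.mp (abs_besselJ_le 1 (by norm_num : |(1 : ℝ)| ≤ 1))
  have hJ1' := five_twelfths_le_besselJ_one_one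
  norm_num at hJ0 hJ1
  constructor
  · nlinarith [sub_half_mul_le_besselEnvelope 1, sq_nonneg (besselJ 0 1)]
  · nlinarith [besselEnvelope_le_add_half_mul 1]

theorem besselEnvelope_bounds {s : ℝ} (hs : 1 ≤ s) :
    1 / 40 ≤ besselEnvelope s ∧ besselEnvelope s ≤ 10 := by
  obtain ⟨hlow, hup⟩ := mul_exp_neg_one_le_and_le_mul_exp_one
    (fun s hs => hasDerivAt_besselEnvelope (by positivity))
    (fun s hs => abs_besselJ_mul_besselJ_div_le hs) hs
  obtain ⟨h1low, h1up⟩ := besselEnvelope_one_bounds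
  have he : exp 1 ≤ 3 := exp_one_lt_d9.le.trans (by norm_num)
  have he' : 1 / 3 ≤ exp (-1) := by
    rw [exp_neg, one_div]
    exact inv_anti₀ (exp_pos 1) he
  constructor <;> nlinarith [exp_pos 1, exp_pos (-1)]

noncomputable def besselV (s : ℝ) : ℝ := √s * besselJ 1 s

noncomputable def besselW (s : ℝ) : ℝ := √s * besselJ 0 s - besselJ 1 s / (2 * √s)

theorem hasDerivAt_besselV {s : ℝ} (hs : 0 < s) : HasDerivAt besselV (besselW s) s := by
  refine ((hasDerivAt_sqrt hs.ne').mul (hasDerivAt_besselJ_succ 0 hs.ne')).congr_deriv ?_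
  obtain ⟨q, hq, rfl⟩ : ∃ q > 0, s = q ^ 2 := ⟨√s, sqrt_pos.2 hs, (sq_sqrt hs.le).symm⟩
  rw [besselW, sqrt_sq hq.le]
  push_cast
  field_simp
  ring

theorem besselV_sq_add_besselW_sq {s : ℝ} (hs : 0 < s) :
    besselV s ^ 2 + besselW s ^ 2 = besselEnvelope s + besselJ 1 s ^ 2 / (4 * s) := by
  obtain ⟨q, hq, rfl⟩ : ∃ q > 0, s = q ^ 2 := ⟨√s, sqrt_pos.2 hs, (sq_sqrt hs.le).symm⟩
  rw [besselV, besselW, besselEnvelope, sqrt_sq hq.le]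
  field_simp
  ring

theorem one_fortieth_le_besselV_sq_add_besselW_sq {s : ℝ} (hs : 1 ≤ s) :
    1 / 40 ≤ besselV s ^ 2 + besselW s ^ 2 := by
  rw [besselV_sq_add_besselW_sq (by positivity)]
  have : 0 ≤ besselJ 1 s ^ 2 / (4 * s) := by positivity
  linarith [(besselEnvelope_bounds hs).1]

theorem mul_sq_add_sq_le_twenty {s : ℝ} (hs : 1 ≤ s) :
    s * (besselJ 0 s ^ 2 + besselJ 1 s ^ 2) ≤ 20 := by
  linarith [mul_sq_add_sq_le_two_mul_besselEnvelope hs, (besselEnvelope_bounds hs).2]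

theorem abs_besselW_le {s : ℝ} (hs : 1 ≤ s) : |besselW s| ≤ 7 := by
  have hs0 : 0 < s := by positivity
  have hss : √s ^ 2 = s := sq_sqrt hs0.le
  have hJ1 : besselJ 1 s ^ 2 / (4 * s) ≤ s * besselJ 1 s ^ 2 := by
    rw [div_le_iff₀ (by positivity)]
    nlinarith [sq_nonneg (besselJ 1 s), mul_nonneg (sq_nonneg (besselJ 1 s)) (sub_nonneg.2 hs)]
  have hsq :
      besselW s ^ 2 ≤ 2 * (√s * besselJ 0 s) ^ 2 + 2 * (besselJ 1 s / (2 * √s)) ^ 2 := by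
    unfold besselW
    nlinarith [sq_nonneg (√s * besselJ 0 s + besselJ 1 s / (2 * √s))]
  have hsplit : (besselJ 1 s / (2 * √s)) ^ 2 = besselJ 1 s ^ 2 / (4 * s) := by
    rw [div_pow, mul_pow, hss]
    norm_num
  rw [mul_pow, hss, hsplit] at hsq
  apply abs_le_of_sq_le_sq _ (by norm_num)
  nlinarith [mul_sq_add_sq_le_twenty hs]

theorem exists_one_fiftieth_le_besselV_sq {a : ℝ} (ha : 1 ≤ a) :
    ∃ t ∈ Icc a (a + 5), 1 / 50 ≤ besselV t ^ 2 := by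
  -- Otherwise `v²` is small at `a`, at `a + 5` and at a mean value point `c`, so `v'(c)` is small.
  by_contra! hsmall
  obtain ⟨c, hc, hslope⟩ := exists_hasDerivAt_eq_slope besselV besselW (by linarith : a < a + 5)
    (fun t ht => (hasDerivAt_besselV (by linarith [ht.1])).continuousAt.continuousWithinAt)
    (fun t ht => hasDerivAt_besselV (by linarith [ht.1]))
  have hva := hsmall a (left_mem_Icc.2 (by linarith))
  have hvb := hsmall (a + 5) (right_mem_Icc.2 (by linarith))
  have hvc := hsmall c (Ioo_subset_Icc_self hc)
  have hwc : besselW c ^ 2 ≤ 2 * (besselV (a + 5) ^ 2 + besselV a ^ 2) / 25 := by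
    rw [hslope, add_sub_cancel_left, div_pow]
    nlinarith [sq_nonneg (besselV (a + 5) + besselV a)]
  linarith [one_fortieth_le_besselV_sq_add_besselW_sq (ha.trans hc.1.le)]

theorem exists_Icc_one_hundredth_le_besselV_sq {a : ℝ} (ha : 1 ≤ a) :
    ∃ t ∈ Icc a (a + 5), ∀ u ∈ Icc t (t + 1 / 200), 1 / 100 ≤ besselV u ^ 2 := by
  obtain ⟨t, ht, hvt⟩ := exists_one_fiftieth_le_besselV_sq ha
  refine ⟨t, ht, fun u hu => ?_⟩
  have h1 : ∀ y ∈ Icc t (t + 1 / 200), 1 ≤ y := fun y hy => by linarith [ht.1, hy.1]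
  have hlip : |besselV u - besselV t| ≤ 7 * |u - t| :=
    (convex_Icc t (t + 1 / 200)).norm_image_sub_le_of_norm_hasDerivWithin_le
      (fun y hy => (hasDerivAt_besselV (by linarith [h1 y hy])).hasDerivWithinAt)
      (fun y hy => abs_besselW_le (h1 y hy)) (left_mem_Icc.2 (by norm_num)) hu
  have hut : |u - t| ≤ 1 / 200 := abs_le.2 ⟨by linarith [hu.1], by linarith [hu.2]⟩
  have hvt' : 27 / 200 ≤ |besselV t| := by
    rw [← abs_of_pos (by norm_num : (0 : ℝ) < 27 / 200), ← sq_le_sq]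
    linarith
  have hvu : 1 / 10 ≤ |besselV u| := by
    linarith [abs_sub_abs_le_abs_sub (besselV t) (besselV u), abs_sub_comm (besselV u) (besselV t)]
  rw [← sq_abs]
  nlinarith

theorem pow_four_mul_div_le_of_abs_le_half {l m M S : ℝ} (hm : 0 < m) (hml : m < l)
    (hS : |S| ≤ |M| / 2) :
    M ^ 4 * m / (16 * l ^ 3) ≤ |M - S| ^ 4 / (l ^ 2 - m ^ 2) ^ 2 * (l * m) := by
  have hl : 0 < l := hm.trans hml
  have hMS : |M| / 2 ≤ |M - S| := by linarith [abs_sub_abs_le_abs_sub M S]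
  have hden : 0 < l ^ 2 - m ^ 2 := by nlinarith
  calc M ^ 4 * m / (16 * l ^ 3) = (|M| / 2) ^ 4 / (l ^ 2) ^ 2 * (l * m) := by
        rw [div_pow, (by decide : Even 4).pow_abs]
        field_simp
        ring
    _ ≤ |M - S| ^ 4 / (l ^ 2 - m ^ 2) ^ 2 * (l * m) := by
        gcongr
        linarith [sq_nonneg m]

noncomputable def besselTestIntegrand (x : ℝ) (p : ℝ × ℝ) : ℝ :=
  |p.1 * besselJ 1 (x * p.1) * besselJ 0 (x * p.2)
      - p.2 * besselJ 1 (x * p.2) * besselJ 0 (x * p.1)| ^ 4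
    / (p.1 ^ 2 - p.2 ^ 2) ^ 2 * (p.1 * p.2)

theorem le_besselTestIntegrand {x l m : ℝ} (hx : 0 < x) (hm : m ∈ Icc (1 / (2 * x)) (1 / x))
    (hl : 200 ≤ x * l) (hv : 1 / 100 ≤ besselV (x * l) ^ 2) :
    1 / (5120000 * x ^ 3 * l) ≤ besselTestIntegrand x (l, m) := by
  have hl0 : 0 < l := pos_of_mul_pos_right (by linarith) hx.le
  have hm0 : 0 < m := lt_of_lt_of_le (by positivity) hm.1
  have hxm : |x * m| ≤ 1 := by
    rw [abs_of_pos (by positivity)]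
    calc x * m ≤ x * (1 / x) := by gcongr; exact hm.2
      _ = 1 := by field_simp
  have hJ0m := two_thirds_le_besselJ_zero hxm
  have hJ1m : |besselJ 1 (x * m)| ≤ 2 / 3 := (abs_besselJ_le 1 hxm).trans_eq (by norm_num)
  have hJ1l : 1 / (100 * (x * l)) ≤ besselJ 1 (x * l) ^ 2 := by
    rw [besselV, mul_pow, sq_sqrt (by positivity)] at hv
    rw [div_le_iff₀ (by positivity)]
    linarith
  have hJ0l : besselJ 0 (x * l) ^ 2 ≤ 20 / (x * l) := by
    rw [le_div_iff₀ (by positivity)]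
    nlinarith [mul_sq_add_sq_le_twenty (show 1 ≤ x * l by linarith),
      sq_nonneg (besselJ 1 (x * l))]
  set M := l * besselJ 1 (x * l) * besselJ 0 (x * m)
  set S := m * besselJ 1 (x * m) * besselJ 0 (x * l)
  have hM : l / (400 * x) ≤ M ^ 2 := by
    calc l / (400 * x) ≤ l / (225 * x) := by gcongr; norm_num
      _ = l ^ 2 * (1 / (100 * (x * l))) * (2 / 3) ^ 2 := by field_simp; ring
      _ ≤ l ^ 2 * besselJ 1 (x * l) ^ 2 * besselJ 0 (x * m) ^ 2 := by gcongr
      _ = M ^ 2 := by ring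
  have hS : S ^ 2 ≤ 20 / (x ^ 3 * l) := by
    have hJ1m2 : besselJ 1 (x * m) ^ 2 ≤ 1 := by
      rw [sq_le_one_iff_abs_le_one]
      linarith
    calc S ^ 2 = m ^ 2 * besselJ 1 (x * m) ^ 2 * besselJ 0 (x * l) ^ 2 := by ring
      _ ≤ (1 / x) ^ 2 * 1 * (20 / (x * l)) := by gcongr; exact hm.2
      _ = 20 / (x ^ 3 * l) := by field_simp
  have hSM : |S| ≤ |M| / 2 := by
    have hxl : 40000 ≤ (x * l) ^ 2 := by nlinarith
    have hcross : 20 / (x ^ 3 * l) ≤ l / (400 * x) / 2 ^ 2 := by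
      rw [div_div, div_le_div_iff₀ (by positivity) (by positivity)]
      nlinarith [mul_le_mul_of_nonneg_left hxl hx.le]
    rw [← abs_two, ← abs_div, ← sq_le_sq, div_pow]
    exact hS.trans (hcross.trans (by gcongr))
  have hml : m < l := (mul_lt_mul_iff_right₀ hx).1 (by linarith [le_abs_self (x * m)])
  calc 1 / (5120000 * x ^ 3 * l) = (l / (400 * x)) ^ 2 * (1 / (2 * x)) / (16 * l ^ 3) := by
        field_simp
        ring
    _ ≤ (M ^ 2) ^ 2 * m / (16 * l ^ 3) := by gcongr; exact hm.1
    _ = M ^ 4 * m / (16 * l ^ 3) := by ring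
    _ ≤ _ := pow_four_mul_div_le_of_abs_le_half hm0 hml hSM

theorem setLIntegral_eq_top_of_tsum_eq_top {α : Type*} [MeasurableSpace α] {μ : Measure α}
    {f : α → ENNReal} {s : Set α} {R : ℕ → Set α} (hR : ∀ n, MeasurableSet (R n))
    (hdisj : Pairwise (Disjoint on R)) (hsub : ∀ n, R n ⊆ s)
    (htop : ∑' n, ∫⁻ a in R n, f a ∂μ = ⊤) : ∫⁻ a in s, f a ∂μ = ⊤ := by
  rw [← lintegral_iUnion hR hdisj] at htop
  exact eq_top_mono (lintegral_mono_set (iUnion_subset hsub)) htop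

theorem tsum_ofReal_div_natCast_succ_eq_top {c : ℝ} (hc : 0 < c) :
    ∑' n : ℕ, ENNReal.ofReal (c / (n + 1)) = ⊤ := by
  by_contra h
  have hsum := (ENNReal.summable_toReal h).mul_left c⁻¹
  refine Real.not_summable_one_div_natCast ((summable_nat_add_iff 1).1 ?_)
  refine hsum.congr fun n => ?_
  rw [ENNReal.toReal_ofReal (by positivity)]
  push_cast
  field_simp

def besselBox (x t : ℝ) : Set (ℝ × ℝ) :=
  Icc (t / x) ((t + 1 / 200) / x) ×ˢ Icc (1 / (2 * x)) (1 / x)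

theorem measurableSet_besselBox (x t : ℝ) : MeasurableSet (besselBox x t) :=
  measurableSet_Icc.prod measurableSet_Icc

theorem besselBox_subset {x t : ℝ} (hx : 0 < x) (ht : 1 < t) :
    besselBox x t ⊆ {p : ℝ × ℝ | 0 < p.2 ∧ p.2 < p.1} := by
  rintro ⟨l, m⟩ ⟨hl, hm⟩
  refine ⟨lt_of_lt_of_le (by positivity) hm.1, hm.2.trans_lt (lt_of_lt_of_le ?_ hl.1)⟩
  gcongr

theorem pairwise_disjoint_besselBox {x : ℝ} {t : ℕ → ℝ} (hx : 0 < x)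
    (ht : ∀ m n, m < n → t m + 1 / 200 < t n) :
    Pairwise (Disjoint on fun n => besselBox x (t n)) := by
  refine (pairwise_disjoint_on _).2 fun m n hmn => disjoint_prod.2 (Or.inl ?_)
  rw [Set.disjoint_left]
  intro l hm hn
  have : (t m + 1 / 200) / x < t n / x := by gcongr; exact ht m n hmn
  linarith [hm.2, hn.1]

theorem volume_besselBox {x : ℝ} (hx : 0 < x) (t : ℝ) :
    volume (besselBox x t) = ENNReal.ofReal (1 / (400 * x ^ 2)) := by
  have h1 : (t + 1 / 200) / x - t / x = 1 / (200 * x) := by field_simp; ring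
  have h2 : 1 / x - 1 / (2 * x) = 1 / (2 * x) := by field_simp; ring
  rw [besselBox, Measure.volume_eq_prod, Measure.prod_prod, Real.volume_Icc, Real.volume_Icc,
    h1, h2, ← ENNReal.ofReal_mul (by positivity)]
  congr 1
  field_simp
  ring

theorem le_setLIntegral_besselBox {x t : ℝ} (hx : 0 < x) (ht : 200 ≤ t)
    (hv : ∀ u ∈ Icc t (t + 1 / 200), 1 / 100 ≤ besselV u ^ 2) :
    ENNReal.ofReal (1 / (2048000000 * x ^ 4 * (t + 1))) ≤
      ∫⁻ p in besselBox x t, ENNReal.ofReal (besselTestIntegrand x p) := by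
  have hpoint : ∀ p ∈ besselBox x t,
      ENNReal.ofReal (1 / (5120000 * x ^ 2 * (t + 1))) ≤
        ENNReal.ofReal (besselTestIntegrand x p) := by
    rintro ⟨l, m⟩ ⟨hl, hm⟩
    have hxl : x * l ∈ Icc t (t + 1 / 200) :=
      ⟨(div_le_iff₀' hx).1 hl.1, (le_div_iff₀' hx).1 hl.2⟩
    have hl0 : 0 < l := lt_of_lt_of_le (by positivity) hl.1
    refine ENNReal.ofReal_le_ofReal ((one_div_le_one_div_of_le (by positivity) ?_).trans
      (le_besselTestIntegrand hx hm (ht.trans hxl.1) (hv _ hxl)))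
    nlinarith [mul_le_mul_of_nonneg_left hxl.2 (sq_nonneg x)]
  calc ENNReal.ofReal (1 / (2048000000 * x ^ 4 * (t + 1)))
      = ENNReal.ofReal (1 / (5120000 * x ^ 2 * (t + 1))) * volume (besselBox x t) := by
        rw [volume_besselBox hx, ← ENNReal.ofReal_mul (by positivity)]
        congr 1
        field_simp
        ring
    _ ≤ _ := by
        rw [← setLIntegral_const]
        exact setLIntegral_mono' (measurableSet_besselBox x t) hpoint

/-- Type D singular point, `q = 2` (`r = 0`), `k = 2`: the Plancherel test integral over the
Weyl chamber `{λ₁ > λ₂ > 0}` diverges, which shows failure of `L¹`-`L²` dichotomy. -/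
theorem stmt_11 (x : ℝ) (hx : 0 < x) :
    ∫⁻ p in {p : ℝ × ℝ | 0 < p.2 ∧ p.2 < p.1},
      ENNReal.ofReal
        (|p.1 * besselJ 1 (x * p.1) * besselJ 0 (x * p.2)
            - p.2 * besselJ 1 (x * p.2) * besselJ 0 (x * p.1)| ^ 4
          / (p.1 ^ 2 - p.2 ^ 2) ^ 2 * (p.1 * p.2)) = ⊤ := by
  choose t ht hgood using fun n : ℕ => exists_Icc_one_hundredth_le_besselV_sq
    (a := 200 + 6 * n) (by linarith [n.cast_nonneg (α := ℝ)])
  have hgap : ∀ m n : ℕ, m < n → t m + 1 / 200 < t n := fun m n hmn => by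
    have : (m : ℝ) + 1 ≤ n := by exact_mod_cast hmn
    linarith [(ht m).2, (ht n).1]
  have ht200 : ∀ n, 200 ≤ t n := fun n => by linarith [(ht n).1, n.cast_nonneg (α := ℝ)]
  have hbox : ∀ n : ℕ, ENNReal.ofReal (1 / (2048000000 * x ^ 4 * 206) / (n + 1)) ≤
      ∫⁻ p in besselBox x (t n), ENNReal.ofReal (besselTestIntegrand x p) := fun n => by
    refine (ENNReal.ofReal_le_ofReal ?_).trans (le_setLIntegral_besselBox hx (ht200 n) (hgood n))
    have : t n + 1 ≤ 206 * (n + 1) := by linarith [(ht n).2, n.cast_nonneg (α := ℝ)]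
    rw [div_div, one_div_le_one_div (by positivity) (by have := ht200 n; positivity)]
    nlinarith [pow_pos hx 4]
  change ∫⁻ p in _, ENNReal.ofReal (besselTestIntegrand x p) = ⊤
  refine setLIntegral_eq_top_of_tsum_eq_top (fun n => measurableSet_besselBox x (t n))
    (pairwise_disjoint_besselBox hx hgap) (fun n => besselBox_subset hx (by linarith [ht200 n])) ?_
  exact eq_top_mono (ENNReal.tsum_le_tsum hbox)
    (tsum_ofReal_div_natCast_succ_eq_top (by positivity))
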